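/- Let X be a metric space with at least two points having positive distance, let x₁, …, xₙ ∈ X be distinct points, and define ε = min over pairs i ≠ j of d(x_i, x_j) > 0. Let y₁, …, yₙ ∈ ℝ and define, for x ∉ {x₁,…,xₙ}, f(x) = (Σ_i y_i · (ε / d(x, x_i))) / (Σ_i (ε / d(x, x_i))). Then for each index i₀, the limit of f(x) as x → x_{i₀} (with x ranging over X \ {x₁,…,xₙ}) equals y_{i₀}. -/

import Mathlib

/-!
Dividing numerator and denominator by the weight `ε / d(z, x i₀)` (legitimate because `ε > 0`
for distinct points) turns the average into one with relative weights `d(z, x i₀) / d(z, x i)`,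
which equal `1` for `i = i₀` and tend to `0` for `i ≠ i₀` as `z → x i₀`. The limit of the
average is therefore `y i₀ / 1`.
-/

open Filter Topology

theorem Finset.sum_mul_div_sum_mul_left {ι K : Type*} [Field K] (s : Finset ι) (y w : ι → K)
    {c : K} (hc : c ≠ 0) :
    (∑ i ∈ s, y i * (c * w i)) / ∑ i ∈ s, c * w i = (∑ i ∈ s, y i * w i) / ∑ i ∈ s, w i := by
  simp only [mul_left_comm _ c, ← Finset.mul_sum, mul_div_mul_left _ _ hc]

theorem tendsto_weighted_average_of_tendsto_div {α ι 𝕜 : Type*} [Fintype ι] [NormedField 𝕜]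
    {l : Filter α} (w : ι → α → 𝕜) (y : ι → 𝕜) (i₀ : ι) (hw : ∀ᶠ z in l, w i₀ z ≠ 0)
    (hrel : ∀ i ≠ i₀, Tendsto (fun z => w i z / w i₀ z) l (𝓝 0)) :
    Tendsto (fun z => (∑ i, y i * w i z) / ∑ i, w i z) l (𝓝 (y i₀)) := by
  classical
  have hratio : ∀ i, Tendsto (fun z => w i z / w i₀ z) l (𝓝 (if i = i₀ then 1 else 0)) := by
    intro i
    by_cases h : i = i₀
    · subst h
      simp only [if_true]
      exact tendsto_const_nhds.congr' (hw.mono fun z hz => (div_self hz).symm)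
    · simpa only [if_neg h] using hrel i h
  have hnum := tendsto_finsetSum Finset.univ fun i _ => (hratio i).const_mul (y i)
  have hden := tendsto_finsetSum Finset.univ fun i _ => hratio i
  simp only [mul_ite, mul_one, mul_zero, Finset.sum_ite_eq', Finset.mem_univ, if_true] at hnum hden
  refine (div_one (y i₀) ▸ hnum.div hden one_ne_zero).congr' ?_
  filter_upwards [hw] with z hz
  show (∑ i, y i * (w i z / w i₀ z)) / ∑ i, w i z / w i₀ z = _
  simpa only [div_eq_inv_mul] using
    Finset.sum_mul_div_sum_mul_left Finset.univ y (fun i => w i z) (inv_ne_zero hz)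

theorem tendsto_dist_div_dist_nhds {X : Type*} [PseudoMetricSpace X] {a b : X}
    (hab : dist a b ≠ 0) : Tendsto (fun z => dist z a / dist z b) (𝓝 a) (𝓝 0) := by
  simpa [Pi.div_def] using
    (tendsto_id.dist (tendsto_const_nhds (x := a))).div (tendsto_id.dist tendsto_const_nhds) hab

theorem iInf_dist_pos_of_injective {X ι : Type*} [MetricSpace X] [Finite ι] [Nontrivial ι]
    {x : ι → X} (hx : Function.Injective x) :
    0 < ⨅ p : {p : ι × ι // p.1 ≠ p.2}, dist (x p.1.1) (x p.1.2) := by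
  obtain ⟨i, j, hij⟩ := exists_pair_ne ι
  have : Nonempty {p : ι × ι // p.1 ≠ p.2} := ⟨⟨(i, j), hij⟩⟩
  obtain ⟨p, hp⟩ := exists_eq_ciInf_of_finite
    (f := fun p : {p : ι × ι // p.1 ≠ p.2} => dist (x p.1.1) (x p.1.2))
  exact hp ▸ dist_pos.mpr (hx.ne p.2)

/-- The normalized inverse-distance kernel weighted average tends to the
prescribed value at each interpolation point. -/
theorem stmt_1 {X : Type*} [MetricSpace X] {n : ℕ} (hn : 2 ≤ n)
    (x : Fin n → X) (hx : Function.Injective x)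
    (y : Fin n → ℝ)
    (ε : ℝ)
    (hε : ε = ⨅ p : {p : Fin n × Fin n // p.1 ≠ p.2}, dist (x p.1.1) (x p.1.2))
    (f : X → ℝ)
    (hf : ∀ z ∉ Set.range x,
      f z = (∑ i, y i * (ε / dist z (x i))) / (∑ i, ε / dist z (x i)))
    (i₀ : Fin n) :
    Tendsto f (𝓝[(Set.range x)ᶜ] (x i₀)) (𝓝 (y i₀)) := by
  have : Nontrivial (Fin n) := Fin.nontrivial_iff_two_le.mpr hn
  have hε₀ : ε ≠ 0 := hε ▸ (iInf_dist_pos_of_injective hx).ne'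
  refine (tendsto_weighted_average_of_tendsto_div (fun i z => ε / dist z (x i)) y i₀ ?_
    fun i hi => ?_).congr' ?_
  · filter_upwards [self_mem_nhdsWithin] with z hz
    exact div_ne_zero hε₀ (dist_ne_zero.mpr fun h => hz ⟨i₀, h.symm⟩)
  · simp only [div_div_div_cancel_left' _ _ hε₀]
    exact (tendsto_dist_div_dist_nhds (dist_ne_zero.mpr (hx.ne hi.symm))).mono_left
      nhdsWithin_le_nhds
  · filter_upwards [self_mem_nhdsWithin] with z hz
    exact (hf z hz).symm
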